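/- Let d be an even positive integer, A_0 a commutative Noetherian integral domain, r_0,…,r_d elements of A_0, a ≥ 0 an integer, and for each n ≥ 1 let M_n be the n-th multidiagonal matrix with respect to r_0,…,r_d. Let x,y be indeterminates and A = A_0[x,y]/((xy)^a·(r_0x^d + r_1x^{d−1}y + ⋯ + r_dy^d)). If S ⊆ ℕ is a subset such that the union over n ∈ S of the sets of minimal primes of the principal ideals (det M_{n−a−d/2})A_0 is an infinite set, then the union over n ∈ S of the sets of associated primes Ass_A A/(x^n,y^n)A is an infinite set. -/

import Mathlib

set_option synthInstance.maxHeartbeats 1000000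
set_option maxHeartbeats 1000000

open MvPolynomial

/-- The `n`-th multidiagonal matrix with respect to `r 0, …, r d`: the `(i,j)` entry is
`r (d/2 + i − j)` when `0 ≤ d/2 + i − j ≤ d` and `0` otherwise. -/
def multidiag {A₀ : Type} [CommRing A₀] (d : ℕ) (r : ℕ → A₀) (n : ℕ) :
    Matrix (Fin n) (Fin n) A₀ :=
  Matrix.of fun i j =>
    if (j : ℕ) ≤ d / 2 + (i : ℕ) ∧ d / 2 + (i : ℕ) ≤ d + (j : ℕ) then
      r (d / 2 + (i : ℕ) - (j : ℕ))
    else 0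

/-- The polynomial `(xy)^a (r₀ x^d + r₁ x^{d−1} y + ⋯ + r_d y^d)` in `A₀[x,y]`, with `x = X 0`,
`y = X 1`. -/
noncomputable def mdPoly {A₀ : Type} [CommRing A₀] (d a : ℕ) (r : ℕ → A₀) :
    MvPolynomial (Fin 2) A₀ :=
  (X 0 * X 1) ^ a * ∑ i ∈ Finset.range (d + 1), C (r i) * X 0 ^ (d - i) * X 1 ^ i

/-!
A minimal prime `p` of `(det M_m)` is a minimal prime of the annihilator of the cokernel of
`M_m` (the two ideals have the same radical), hence an associated prime of it: some `v`
satisfies `c • v ∈ im M_m ↔ c ∈ p`. With `q = a + d/2` and `n = m + q`, spread the entries of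
`v` over the `m` monomials `x^(n-1-i) y^(q+i)` of degree `n + q - 1` that survive modulo
`(xⁿ, yⁿ)`. Multiplying `f = (xy)^a (r₀ x^d + ⋯ + r_d y^d)` by `x^(m-1-j) y^j` puts
`r_(d/2+i-j)` on the `i`-th of these monomials, i.e. the `j`-th column of `M_m`, so such a
window polynomial lies in `(f, xⁿ, yⁿ)` iff its coefficient vector lies in `im M_m`. Since `x`
and `y` are nilpotent modulo `(xⁿ, yⁿ)`, the annihilator of the window of `v` in `A/(xⁿ, yⁿ)`
then has radical `p + (x, y)`, an associated prime that contracts to `p` in `A₀`.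
-/

namespace Matrix

variable {R : Type*} [CommRing R] {n : Type*} [Fintype n] [DecidableEq n]

theorem det_smul_mem_range_mulVecLin (M : Matrix n n R) (v : n → R) :
    M.det • v ∈ LinearMap.range M.mulVecLin :=
  ⟨M.adjugate *ᵥ v, by simp [mulVec_mulVec, mul_adjugate, smul_mulVec]⟩

theorem pow_card_mem_span_det_of_forall_smul_mem_range (M : Matrix n n R) {c : R}
    (hc : ∀ v : n → R, c • v ∈ LinearMap.range M.mulVecLin) :
    c ^ Fintype.card n ∈ Ideal.span {M.det} := by
  choose N hN using fun j => hc (Pi.single j 1)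
  have hMN : M * (of N)ᵀ = c • 1 := by
    ext i j
    have := congrFun (hN j) i
    simp only [mulVecLin_apply, mulVec, dotProduct] at this
    simp [mul_apply, this, Pi.single_apply, one_apply]
  refine Ideal.mem_span_singleton'.2 ⟨(of N)ᵀ.det, ?_⟩
  rw [mul_comm, ← det_mul, hMN, det_smul, det_one, mul_one]

theorem radical_annihilator_cokernel (M : Matrix n n R) :
    (Module.annihilator R ((n → R) ⧸ LinearMap.range M.mulVecLin)).radical =
      (Ideal.span {M.det}).radical := by
  refine le_antisymm (Ideal.radical_le_radical_iff.2 fun c hc => ?_) (Ideal.radical_mono ?_)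
  · rw [Submodule.annihilator_quotient, Submodule.mem_colon] at hc
    exact ⟨_, pow_card_mem_span_det_of_forall_smul_mem_range M fun v => hc v trivial⟩
  · rw [Ideal.span_le, Set.singleton_subset_iff, SetLike.mem_coe,
      Submodule.annihilator_quotient, Submodule.mem_colon]
    exact fun v _ => det_smul_mem_range_mulVecLin M v

theorem exists_forall_smul_mem_range_mulVecLin_iff [IsNoetherianRing R] (M : Matrix n n R)
    {p : Ideal R} (hp : p ∈ (Ideal.span {M.det}).minimalPrimes) :
    ∃ v : n → R, ∀ c : R, c • v ∈ LinearMap.range M.mulVecLin ↔ c ∈ p := by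
  rw [← Ideal.radical_minimalPrimes, ← radical_annihilator_cokernel,
    Ideal.radical_minimalPrimes] at hp
  obtain ⟨-, v, hv⟩ := isAssociatedPrime_iff.1 <|
    Module.associatedPrimes.minimalPrimes_annihilator_subset_associatedPrimes R _ hp
  obtain ⟨v, rfl⟩ := Submodule.Quotient.mk_surjective _ v
  refine ⟨v, fun c => ?_⟩
  rw [hv, Submodule.mem_colon_singleton, Submodule.mem_bot, ← Submodule.Quotient.mk_smul,
    Submodule.Quotient.mk_eq_zero]

end Matrix

theorem exists_isAssociatedPrime_quotient_comap_eq {R S : Type*} [CommRing R] [CommRing S]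
    {f : R →+* S} (hf : Function.Surjective f) {K : Ideal R} [K.IsPrime] {L : Ideal S} {w : R}
    (hK : ((L.comap f).colon {w}).radical = K) :
    ∃ P : Ideal S, IsAssociatedPrime P (S ⧸ L) ∧ P.comap f = K := by
  have hker : RingHom.ker f ≤ (L.comap f).colon {w} :=
    (Ideal.ker_le_comap (K := L) f).trans Ideal.le_colon
  have hkerK : RingHom.ker f ≤ K := hker.trans (hK ▸ Ideal.le_radical)
  have hcolon : ((⊥ : Submodule S (S ⧸ L)).colon {Ideal.Quotient.mk L (f w)}).comap f =
      (L.comap f).colon {w} := by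
    ext r
    simp [Submodule.mem_colon_singleton, Algebra.smul_def, ← map_mul,
      Ideal.Quotient.eq_zero_iff_mem]
  refine ⟨K.map f, ⟨Ideal.map_isPrime_of_surjective hf hkerK, Ideal.Quotient.mk L (f w), ?_⟩,
    by rw [Ideal.comap_map_of_surjective' f hf, sup_eq_left.2 hkerK]⟩
  rw [← Ideal.map_comap_of_surjective f hf (Submodule.colon _ _), hcolon,
    ← Ideal.map_radical_of_surjective hf hker, hK]

namespace MvPolynomial

variable {σ R : Type*} [CommSemiring R]

theorem radical_eq_comap_constantCoeff {R : Type*} [CommRing R] {I : Ideal (MvPolynomial σ R)}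
    (hX : ∀ i, X i ∈ I.radical) :
    I.radical = ((I.comap C).radical).comap constantCoeff := by
  have hspan : Ideal.span (Set.range X) ≤ I.radical :=
    Ideal.span_le.2 (Set.range_subset_iff.2 hX)
  ext g
  have hg : g - C (constantCoeff g) ∈ I.radical := by
    refine hspan ?_
    rw [← Set.image_univ, mem_ideal_span_X_image]
    intro e he
    by_contra! h
    obtain rfl : e = 0 := Finsupp.ext fun i => h i trivial
    simp [mem_support_iff, ← constantCoeff_eq] at he
  rw [Ideal.mem_comap, ← Ideal.comap_radical, Ideal.mem_comap]
  exact ⟨fun h => by simpa using I.radical.sub_mem h hg,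
    fun h => by simpa using I.radical.add_mem hg h⟩

theorem coeff_sum_monomial_of_injective {ι : Type*} [Fintype ι] {g : ι → σ →₀ ℕ}
    (hg : Function.Injective g) (c : ι → R) (i : ι) :
    coeff (g i) (∑ j, monomial (g j) (c j)) = c i := by
  classical
  simp [coeff_sum, coeff_monomial, hg.eq_iff]

theorem coeff_sum_monomial_of_notMem_range {ι : Type*} [Fintype ι] {g : ι → σ →₀ ℕ}
    (c : ι → R) {e : σ →₀ ℕ} (he : e ∉ Set.range g) :
    coeff e (∑ j, monomial (g j) (c j)) = 0 := by
  classical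
  simp only [coeff_sum, coeff_monomial]
  exact Finset.sum_eq_zero fun j _ => if_neg fun h => he ⟨j, h⟩

theorem mem_span_X_pow_pair_iff {n : ℕ} {g : MvPolynomial (Fin 2) R} :
    g ∈ Ideal.span {X 0 ^ n, X 1 ^ n} ↔
      ∀ e : Fin 2 →₀ ℕ, e 0 < n → e 1 < n → coeff e g = 0 := by
  have hspan : ({X 0 ^ n, X 1 ^ n} : Set (MvPolynomial (Fin 2) R)) =
      (fun s => monomial s 1) '' {Finsupp.single 0 n, Finsupp.single 1 n} := by
    simp [Set.image_insert_eq, X_pow_eq_monomial]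
  rw [hspan, mem_ideal_span_monomial_image]
  simp only [mem_support_iff, Set.mem_insert_iff, Set.mem_singleton_iff, exists_eq_or_imp,
    exists_eq_left, Finsupp.single_le_iff]
  refine forall_congr' fun e => ⟨fun h h0 h1 => ?_, fun h hne => ?_⟩
  · by_contra hne
    rcases h hne with h | h <;> omega
  · by_contra! hlt
    exact hne (h hlt.1 hlt.2)

end MvPolynomial

noncomputable def xyExp (i j : ℕ) : Fin 2 →₀ ℕ := Finsupp.single 0 i + Finsupp.single 1 j

@[simp] theorem xyExp_apply_zero (i j : ℕ) : xyExp i j 0 = i := by simp [xyExp]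

@[simp] theorem xyExp_apply_one (i j : ℕ) : xyExp i j 1 = j := by simp [xyExp]

theorem xyExp_eq_xyExp_iff {i j k l : ℕ} : xyExp i j = xyExp k l ↔ i = k ∧ j = l := by
  simp [Finsupp.ext_iff, Fin.forall_fin_two]

theorem xyExp_le_xyExp_iff {i j k l : ℕ} : xyExp i j ≤ xyExp k l ↔ i ≤ k ∧ j ≤ l := by
  simp [Finsupp.le_def, Fin.forall_fin_two]

theorem xyExp_sub_xyExp (i j k l : ℕ) : xyExp i j - xyExp k l = xyExp (i - k) (j - l) := by
  ext t; fin_cases t <;> simp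

theorem eq_xyExp (e : Fin 2 →₀ ℕ) : e = xyExp (e 0) (e 1) := by
  ext t; fin_cases t <;> simp

noncomputable def windowExp (q m i : ℕ) : Fin 2 →₀ ℕ := xyExp (m + q - 1 - i) (q + i)

section Window

variable {R : Type*} [CommSemiring R]

theorem monomial_xyExp (i j : ℕ) (c : R) :
    monomial (xyExp i j) c = C c * X 0 ^ i * X 1 ^ j := by
  rw [X_pow_eq_monomial, X_pow_eq_monomial, C_mul_monomial, monomial_mul, xyExp, mul_one, mul_one]

noncomputable def window (q m : ℕ) (u : Fin m → R) : MvPolynomial (Fin 2) R :=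
  ∑ i : Fin m, monomial (windowExp q m i) (u i)

theorem window_smul (q m : ℕ) (c : R) (u : Fin m → R) :
    window q m (c • u) = C c * window q m u := by
  simp [window, Finset.mul_sum, C_mul_monomial]

theorem coeff_window (q m : ℕ) (u : Fin m → R) (i : Fin m) :
    coeff (windowExp q m i) (window q m u) = u i :=
  coeff_sum_monomial_of_injective
    (fun _ _ h => Fin.ext (Nat.add_left_cancel (xyExp_eq_xyExp_iff.1 h).2)) u i

end Window

section Multidiagonal

variable {A₀ : Type} [CommRing A₀]

theorem mdPoly_eq_sum_monomial (d a : ℕ) (r : ℕ → A₀) :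
    mdPoly d a r =
      ∑ k ∈ Finset.range (d + 1), monomial (xyExp (a + (d - k)) (a + k)) (r k) := by
  rw [mdPoly, Finset.mul_sum]
  refine Finset.sum_congr rfl fun k _ => ?_
  rw [monomial_xyExp]
  ring

theorem coeff_mul_mdPoly (d a : ℕ) (r : ℕ → A₀) (P : MvPolynomial (Fin 2) A₀)
    (e : Fin 2 →₀ ℕ) :
    coeff e (P * mdPoly d a r) = ∑ k ∈ Finset.range (d + 1),
      if xyExp (a + (d - k)) (a + k) ≤ e then coeff (e - xyExp (a + (d - k)) (a + k)) P * r k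
      else 0 := by
  rw [mdPoly_eq_sum_monomial, Finset.mul_sum, coeff_sum]
  exact Finset.sum_congr rfl fun k _ => coeff_mul_monomial' _ _ _ _

theorem coeff_windowExp_mul_mdPoly {d : ℕ} (hd : Even d) (a m : ℕ) (r : ℕ → A₀)
    (P : MvPolynomial (Fin 2) A₀) (i : Fin m) :
    coeff (windowExp (a + d / 2) m i) (P * mdPoly d a r) =
      ∑ j : Fin m, multidiag d r m i j * coeff (xyExp (m - 1 - j) j) P := by
  obtain ⟨h, rfl⟩ := hd
  have hi := i.2
  simp only [windowExp, multidiag, Matrix.of_apply, ite_mul, zero_mul, coeff_mul_mdPoly,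
    show (h + h) / 2 = h by omega]
  rw [Fin.sum_univ_eq_sum_range (fun j => if j ≤ h + i ∧ h + i ≤ h + h + j then
    r (h + i - j) * coeff (xyExp (m - 1 - j) j) P else 0), ← Finset.sum_filter,
    ← Finset.sum_filter]
  -- the term `r k` of `f` carries `x^(m-1-j) y^j` to the `i`-th window monomial for `j = h + i - k`
  refine Finset.sum_nbij' (fun k => h + i - k) (fun j => h + i - j) ?_ ?_ ?_ ?_ ?_ <;>
    simp only [Finset.mem_filter, Finset.mem_range, xyExp_le_xyExp_iff, xyExp_sub_xyExp]
  · intro k hk; omega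
  · intro j hj; omega
  · intro k hk; omega
  · intro j hj; omega
  · intro k hk
    rw [mul_comm]
    congr 3 <;> omega

theorem window_mem_iff {d : ℕ} (hd : Even d) (a m : ℕ) (r : ℕ → A₀) (u : Fin m → A₀) :
    window (a + d / 2) m u ∈ Ideal.span {X 0 ^ (m + (a + d / 2)), X 1 ^ (m + (a + d / 2))} ⊔
      Ideal.span {mdPoly d a r} ↔ u ∈ LinearMap.range (multidiag d r m).mulVecLin := by
  have hexp : Function.Injective fun j : Fin m => xyExp (m - 1 - j) j :=
    fun _ _ h => Fin.ext (xyExp_eq_xyExp_iff.1 h).2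
  constructor
  · intro hmem
    obtain ⟨y, hy, z, hz, hyz⟩ := Submodule.mem_sup.1 hmem
    obtain ⟨P, rfl⟩ := Ideal.mem_span_singleton'.1 hz
    refine ⟨fun j => coeff (xyExp (m - 1 - j) j) P, funext fun i => ?_⟩
    have hi := i.2
    have hcoeff := congrArg (coeff (windowExp (a + d / 2) m i)) hyz
    rw [coeff_add, mem_span_X_pow_pair_iff.1 hy _ (by simp [windowExp]; omega)
      (by simp [windowExp]; omega), zero_add, coeff_window, coeff_windowExp_mul_mdPoly hd]
      at hcoeff
    simpa [Matrix.mulVec, dotProduct] using hcoeff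
  · rintro ⟨c, rfl⟩
    set P := ∑ j : Fin m, monomial (xyExp (m - 1 - j) j) (c j)
    have hP : ∀ j : Fin m, coeff (xyExp (m - 1 - j) j) P = c j :=
      coeff_sum_monomial_of_injective hexp c
    have hdiff : P * mdPoly d a r - window (a + d / 2) m ((multidiag d r m).mulVecLin c) ∈
        Ideal.span {X 0 ^ (m + (a + d / 2)), X 1 ^ (m + (a + d / 2))} := by
      refine mem_span_X_pow_pair_iff.2 fun e he0 he1 => ?_
      rw [coeff_sub]
      by_cases hwin : ∃ i : Fin m, windowExp (a + d / 2) m i = e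
      · obtain ⟨i, rfl⟩ := hwin
        rw [coeff_windowExp_mul_mdPoly hd, coeff_window]
        simp [hP, Matrix.mulVec, dotProduct]
      · rw [window, coeff_sum_monomial_of_notMem_range _ hwin, sub_zero, coeff_mul_mdPoly]
        refine Finset.sum_eq_zero fun k hk => ?_
        split_ifs with hle
        · rw [coeff_sum_monomial_of_notMem_range, zero_mul]
          rintro ⟨j, hj⟩
          obtain ⟨e0, e1, rfl⟩ : ∃ e0 e1, e = xyExp e0 e1 := ⟨_, _, eq_xyExp e⟩
          obtain ⟨h, rfl⟩ := hd
          simp only [xyExp_sub_xyExp, xyExp_eq_xyExp_iff, xyExp_le_xyExp_iff] at hj hle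
          simp only [xyExp_apply_zero, xyExp_apply_one] at he0 he1
          have := j.2
          have := Finset.mem_range.1 hk
          exact hwin ⟨⟨e1 - (a + (h + h) / 2), by omega⟩,
            by simp only [windowExp, xyExp_eq_xyExp_iff]; omega⟩
        · rfl
    rw [← sub_sub_cancel (P * mdPoly d a r) (window _ m _)]
    exact sub_mem (Ideal.mem_sup_right (Ideal.mul_mem_left _ _ (Ideal.mem_span_singleton_self _)))
      (Ideal.mem_sup_left hdiff)

theorem radical_colon_window_eq {d : ℕ} (hd : Even d) (a m : ℕ) (r : ℕ → A₀)
    {p : Ideal A₀} [p.IsPrime] {v : Fin m → A₀}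
    (hv : ∀ c : A₀, c • v ∈ LinearMap.range (multidiag d r m).mulVecLin ↔ c ∈ p) :
    ((Ideal.span {X 0 ^ (m + (a + d / 2)), X 1 ^ (m + (a + d / 2))} ⊔
      Ideal.span {mdPoly d a r}).colon {window (a + d / 2) m v}).radical =
        p.comap constantCoeff := by
  have hX : ∀ i : Fin 2, X i ^ (m + (a + d / 2)) ∈ Ideal.span {X 0 ^ (m + (a + d / 2)),
      (X 1 : MvPolynomial (Fin 2) A₀) ^ (m + (a + d / 2))} := by
    intro i; fin_cases i <;> exact Ideal.subset_span (by simp)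
  rw [radical_eq_comap_constantCoeff fun i => ⟨_, Submodule.mem_colon_singleton.2
    (Ideal.mem_sup_left (Ideal.mul_mem_right _ _ (hX i)))⟩]
  congr 1
  convert Ideal.IsPrime.radical ‹p.IsPrime› using 2
  ext c
  rw [Ideal.mem_comap, Submodule.mem_colon_singleton, smul_eq_mul, ← window_smul,
    window_mem_iff hd, hv]

theorem exists_mem_associatedPrimes_comap_eq {d : ℕ} (hd : Even d) (a m : ℕ) (r : ℕ → A₀)
    [IsNoetherianRing A₀] {p : Ideal A₀}
    (hp : p ∈ (Ideal.span {(multidiag d r m).det}).minimalPrimes) :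
    ∃ P ∈ associatedPrimes (MvPolynomial (Fin 2) A₀ ⧸ Ideal.span {mdPoly d a r})
        ((MvPolynomial (Fin 2) A₀ ⧸ Ideal.span {mdPoly d a r}) ⧸
          Ideal.span {Ideal.Quotient.mk (Ideal.span {mdPoly d a r}) (X 0 ^ (m + (a + d / 2))),
            Ideal.Quotient.mk (Ideal.span {mdPoly d a r}) (X 1 ^ (m + (a + d / 2)))}),
      P.comap (algebraMap A₀ _) = p := by
  have := hp.1.1
  obtain ⟨v, hv⟩ := Matrix.exists_forall_smul_mem_range_mulVecLin_iff _ hp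
  have hL : (Ideal.span {Ideal.Quotient.mk (Ideal.span {mdPoly d a r}) (X 0 ^ (m + (a + d / 2))),
      Ideal.Quotient.mk (Ideal.span {mdPoly d a r}) (X 1 ^ (m + (a + d / 2)))}).comap
        (Ideal.Quotient.mk _) = Ideal.span {X 0 ^ (m + (a + d / 2)), X 1 ^ (m + (a + d / 2))} ⊔
          Ideal.span {mdPoly d a r} := by
    rw [← Set.image_pair, ← Ideal.map_span,
      Ideal.comap_map_of_surjective' _ Ideal.Quotient.mk_surjective, Ideal.mk_ker]
  obtain ⟨P, hP, hPK⟩ := exists_isAssociatedPrime_quotient_comap_eq Ideal.Quotient.mk_surjective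
    (hL ▸ radical_colon_window_eq hd a m r hv)
  refine ⟨P, hP, ?_⟩
  rw [IsScalarTower.algebraMap_eq A₀ (MvPolynomial (Fin 2) A₀), ← Ideal.comap_comap,
    Ideal.Quotient.algebraMap_eq, hPK, Ideal.comap_comap, MvPolynomial.algebraMap_eq,
    constantCoeff_comp_C, Ideal.comap_id]

end Multidiagonal

theorem stmt_4 {A₀ : Type} [CommRing A₀] [IsNoetherianRing A₀]
    (d : ℕ) (hd_even : Even d) (r : ℕ → A₀) (a : ℕ) (S : Set ℕ)
    (hS : (⋃ n ∈ S,
        (Ideal.span {(multidiag d r (n - a - d / 2)).det} : Ideal A₀).minimalPrimes).Infinite) :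
    (⋃ n ∈ S,
      associatedPrimes (MvPolynomial (Fin 2) A₀ ⧸ Ideal.span {mdPoly d a r})
        ((MvPolynomial (Fin 2) A₀ ⧸ Ideal.span {mdPoly d a r}) ⧸
          Ideal.span {Ideal.Quotient.mk (Ideal.span {mdPoly d a r}) (X 0 ^ n),
            Ideal.Quotient.mk (Ideal.span {mdPoly d a r}) (X 1 ^ n)})).Infinite := by
  refine (hS.mono ?_).of_image (Ideal.comap (algebraMap A₀ _))
  intro p hp
  obtain ⟨n, hnS, hp⟩ := Set.mem_iUnion₂.1 hp
  -- for `n ≤ a + d/2` the determinant is that of an empty matrix, so `hp` is impossible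
  have hn : n - a - d / 2 + (a + d / 2) = n := by
    by_contra hne
    rw [show n - a - d / 2 = 0 by omega, Matrix.det_fin_zero, Ideal.span_singleton_one] at hp
    exact hp.1.1.ne_top (top_le_iff.1 hp.1.2)
  obtain ⟨P, hP, hPp⟩ := exists_mem_associatedPrimes_comap_eq hd_even a _ r hp
  rw [hn] at hP
  exact ⟨P, Set.mem_iUnion₂.2 ⟨n, hnS, hP⟩, hPp⟩
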